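/- arXiv:2511.23093 — 6 statements merged into one kernel-verified Lean document; each statement's English description precedes it below -/
import Mathlib

section
/- Let n ≤ m, let π be a permutation of [n] and let Π be a permutation of [m]. Then there exists an ordered homomorphism from the augmented ordered matching M'(π) to the augmented ordered matching M'(Π) if and only if Π contains π as a pattern. -/
/-!
Cut the `6s` positions of `M'(σ)` into `2s` blocks of three: a left block is an original vertex
followed by an auxiliary edge, a right block an auxiliary edge followed by an original vertex.
Every auxiliary edge of `M'(P)` joins consecutive positions, while between the ends of a
permutation edge of `M'(p)` there lie two disjoint auxiliary edges; so an ordered homomorphism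
sends permutation edges to permutation edges, and the auxiliary edges separating consecutive
original vertices make the induced maps on left and on right endpoints strictly increasing,
which is a pattern occurrence. Conversely, a pattern occurrence gives a strictly increasing map
of blocks, and inflating it block by block is an ordered homomorphism.
-/

/-- A permutation `P` of `[m]` contains a permutation `p` of `[n]` as a pattern. -/
def ContainsPattern {n m : ℕ} (P : Equiv.Perm (Fin m)) (p : Equiv.Perm (Fin n)) : Prop :=
  ∃ φ : Fin n ↪o Fin m, ∀ j k : Fin n, P (φ j) < P (φ k) ↔ p j < p k

/-- The position, inside the augmented ordered matching `M'(σ)` on `6s` vertices,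
of the `i`-th original vertex of `M(σ)` (0-indexed, `i < 2s`): two auxiliary
vertices are inserted in each gap between consecutive original vertices, and two
extra ones in the middle gap (between original vertices `s-1` and `s`). -/
def augPos (s i : ℕ) : ℕ := 3 * i + (if s ≤ i then 2 else 0)

/-- The augmented ordered matching `M'(σ)`: the ordered matching `M(σ)` (its
edges, the permutation edges, now join positions `augPos s i` and
`augPos s (s + σ i)`), together with the auxiliary edges: an edge between the
two vertices inserted in each of the `2s - 1` gaps, and one more edge between
the two extra vertices `3s, 3s+1` inserted in the middle gap.  It is an ordered
matching with `3s` edges on `6s` vertices. -/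
def augMatching (s : ℕ) (σ : Equiv.Perm (Fin s)) : SimpleGraph (Fin (6 * s)) :=
  SimpleGraph.fromRel (fun a b =>
    (∃ i : Fin s, (a : ℕ) = augPos s i ∧ (b : ℕ) = augPos s (s + (σ i : ℕ))) ∨
    (∃ i : ℕ, i < 2 * s - 1 ∧ (a : ℕ) = augPos s i + 1 ∧ (b : ℕ) = augPos s i + 2) ∨
    ((a : ℕ) = 3 * s ∧ (b : ℕ) = 3 * s + 1))

lemma containsPattern_iff_exists_strictMono {n m : ℕ} {P : Equiv.Perm (Fin m)}
    {p : Equiv.Perm (Fin n)} :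
    ContainsPattern P p ↔ ∃ φ : Fin n → Fin m, StrictMono φ ∧ StrictMono (P ∘ φ ∘ p.symm) := by
  constructor
  · rintro ⟨φ, hφ⟩
    refine ⟨φ, φ.strictMono, fun r r' h => ?_⟩
    simpa only [Function.comp_apply, hφ, Equiv.apply_symm_apply] using h
  · rintro ⟨φ, hφ, hψ⟩
    refine ⟨OrderEmbedding.ofStrictMono φ hφ, fun j k => ?_⟩
    simpa using hψ.lt_iff_lt (a := p j) (b := p k)

lemma Monotone.lt_of_le_of_adj_of_le {α β : Type*} [Preorder α] [PartialOrder β]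
    {G : SimpleGraph α} {H : SimpleGraph β} {f : α → β} (hf : Monotone f)
    (hadj : ∀ u v, G.Adj u v → H.Adj (f u) (f v)) {x a b y : α}
    (hxa : x ≤ a) (hab : G.Adj a b) (hab' : a ≤ b) (hby : b ≤ y) : f x < f y :=
  (hf hxa).trans_lt (((hf hab').lt_of_ne (hadj _ _ hab).ne).trans_le (hf hby))

/-- The edges of `M'(σ)` in block coordinates: position `3c + r` is the `r`-th vertex of block
`c < 2s`. Block `c < s` is the original vertex `c` followed by its auxiliary edge; block `c ≥ s`
is an auxiliary edge (the middle one for `c = s`) followed by the original vertex `c`. -/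
def BlockEdge (s : ℕ) (σ : Equiv.Perm (Fin s)) (a b : ℕ) : Prop :=
  (∃ i : Fin s, a = 3 * i ∧ b = 3 * (s + σ i) + 2) ∨
  (∃ c < s, a = 3 * c + 1 ∧ b = 3 * c + 2) ∨
  (∃ c, s ≤ c ∧ c < 2 * s ∧ a = 3 * c ∧ b = 3 * c + 1)

section BlockEdge

variable {s : ℕ} {σ : Equiv.Perm (Fin s)}

lemma BlockEdge.lt {a b : ℕ} (h : BlockEdge s σ a b) : a < b := by
  rcases h with ⟨i, rfl, rfl⟩ | ⟨c, -, rfl, rfl⟩ | ⟨c, -, -, rfl, rfl⟩ <;> omega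

lemma BlockEdge.exists_perm_of_ne_succ {a b : ℕ} (h : BlockEdge s σ a b) (hb : b ≠ a + 1) :
    ∃ J : Fin s, a = 3 * J ∧ b = 3 * (s + σ J) + 2 := by
  rcases h with h | ⟨c, -, rfl, rfl⟩ | ⟨c, -, -, rfl, rfl⟩
  · exact h
  all_goals omega

lemma augPos_of_lt {i : ℕ} (h : i < s) : augPos s i = 3 * i := by
  simp [augPos, Nat.not_le.mpr h]

lemma augPos_of_le {i : ℕ} (h : s ≤ i) : augPos s i = 3 * i + 2 := by
  simp [augPos, h]

lemma augMatching_rel_iff_blockEdge {a b : ℕ} (hb : b < 6 * s) :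
    ((∃ i : Fin s, a = augPos s i ∧ b = augPos s (s + (σ i : ℕ))) ∨
      (∃ i : ℕ, i < 2 * s - 1 ∧ a = augPos s i + 1 ∧ b = augPos s i + 2) ∨
      (a = 3 * s ∧ b = 3 * s + 1)) ↔ BlockEdge s σ a b := by
  constructor
  · rintro (⟨i, rfl, rfl⟩ | ⟨i, hi, rfl, rfl⟩ | ⟨rfl, rfl⟩)
    · exact Or.inl ⟨i, augPos_of_lt i.isLt, augPos_of_le (by omega)⟩
    · rcases lt_or_ge i s with h | h
      · exact Or.inr (Or.inl ⟨i, h, by rw [augPos_of_lt h], by rw [augPos_of_lt h]⟩)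
      · -- the auxiliary edge after the right original vertex `i` opens block `i + 1`
        exact Or.inr (Or.inr ⟨i + 1, by omega, by omega, by rw [augPos_of_le h]; ring,
          by rw [augPos_of_le h]; ring⟩)
    · exact Or.inr (Or.inr ⟨s, le_rfl, by omega, rfl, rfl⟩)
  · rintro (⟨i, rfl, rfl⟩ | ⟨c, hc, rfl, rfl⟩ | ⟨c, hc, hc', rfl, rfl⟩)
    · exact Or.inl ⟨i, (augPos_of_lt i.isLt).symm, (augPos_of_le (by omega)).symm⟩
    · exact Or.inr (Or.inl ⟨c, by omega, by rw [augPos_of_lt hc], by rw [augPos_of_lt hc]⟩)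
    · rcases hc.eq_or_lt with rfl | hc
      · exact Or.inr (Or.inr ⟨rfl, rfl⟩)
      · refine Or.inr (Or.inl ⟨c - 1, by omega, ?_, ?_⟩) <;> rw [augPos_of_le (by omega)] <;> omega

lemma augMatching_adj_iff {u v : Fin (6 * s)} :
    (augMatching s σ).Adj u v ↔ BlockEdge s σ u v ∨ BlockEdge s σ v u := by
  rw [augMatching, SimpleGraph.fromRel_adj, augMatching_rel_iff_blockEdge v.isLt,
    augMatching_rel_iff_blockEdge u.isLt]
  refine ⟨And.right, fun h => ⟨?_, h⟩⟩
  rintro rfl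
  rcases h with h | h <;> exact lt_irrefl _ h.lt

lemma blockEdge_of_augMatching_adj {u v : Fin (6 * s)} (h : (augMatching s σ).Adj u v)
    (huv : u < v) : BlockEdge s σ u v :=
  (augMatching_adj_iff.mp h).resolve_right fun h' => h'.lt.not_gt huv

end BlockEdge

def blockMap (g : ℕ → ℕ) (v : ℕ) : ℕ := 3 * g (v / 3) + v % 3

lemma blockMap_of_div_eq {g : ℕ → ℕ} {v c : ℕ} (h : v / 3 = c) :
    blockMap g v = 3 * g c + v % 3 := by
  rw [blockMap, h]

lemma blockMap_mono {g : ℕ → ℕ} {N : ℕ} (hg : StrictMonoOn g (Set.Iio N)) {v w : ℕ}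
    (hvw : v ≤ w) (hw : w < 3 * N) : blockMap g v ≤ blockMap g w := by
  rw [blockMap, blockMap]
  rcases (Nat.div_le_div_right (c := 3) hvw).eq_or_lt with h | h
  · rw [h]; omega
  · have := hg (by simp only [Set.mem_Iio]; omega) (by simp only [Set.mem_Iio]; omega) h
    omega

section Homomorphism

variable {n m : ℕ} {p : Equiv.Perm (Fin n)} {P : Equiv.Perm (Fin m)}

lemma exists_strictMono_of_hom {f : Fin (6 * n) → Fin (6 * m)} (hf : Monotone f)
    (hadj : ∀ u v, (augMatching n p).Adj u v → (augMatching m P).Adj (f u) (f v)) :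
    ∃ φ : Fin n → Fin m, StrictMono φ ∧ StrictMono (P ∘ φ ∘ p.symm) := by
  have across : ∀ x a b y : Fin (6 * n), x ≤ a → BlockEdge n p a b → b ≤ y → f x < f y :=
    fun x a b y hxa hab hby => hf.lt_of_le_of_adj_of_le hadj hxa
      (augMatching_adj_iff.mpr (Or.inl hab)) hab.lt.le hby
  -- between the ends of a permutation edge lie the last left auxiliary edge and the middle edge,
  -- so its image is not an auxiliary edge of `M'(P)`
  have perm_edge : ∀ i : Fin n, ∃ J : Fin m, (f ⟨3 * i, by omega⟩ : ℕ) = 3 * J ∧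
      (f ⟨3 * (n + p i) + 2, by omega⟩ : ℕ) = 3 * (m + P J) + 2 := by
    intro i
    have hn : 0 < n := i.pos
    have hleft := across ⟨3 * i, by omega⟩ ⟨3 * (n - 1) + 1, by omega⟩ ⟨3 * (n - 1) + 2, by omega⟩
      ⟨3 * n, by omega⟩ (Fin.mk_le_mk.mpr (by omega)) (Or.inr (Or.inl ⟨n - 1, by omega, rfl, rfl⟩))
      (Fin.mk_le_mk.mpr (by omega))
    have hmid := across ⟨3 * n, by omega⟩ ⟨3 * n, by omega⟩ ⟨3 * n + 1, by omega⟩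
      ⟨3 * (n + p i) + 2, by omega⟩ le_rfl (Or.inr (Or.inr ⟨n, le_rfl, by omega, rfl, rfl⟩))
      (Fin.mk_le_mk.mpr (by omega))
    have hlt := hmid.trans' (hleft.trans_le (hf (Fin.mk_le_mk.mpr (by omega))))
    refine (blockEdge_of_augMatching_adj (hadj _ _ (augMatching_adj_iff.mpr
      (Or.inl (Or.inl ⟨i, rfl, rfl⟩)))) hlt).exists_perm_of_ne_succ ?_
    rw [Fin.lt_def] at hleft hmid
    omega
  choose J hJl hJr using perm_edge
  refine ⟨J, fun i j hij => ?_, fun (r r' : Fin n) hrr' => ?_⟩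
  · have := across ⟨3 * i, by omega⟩ ⟨3 * i + 1, by omega⟩ ⟨3 * i + 2, by omega⟩ ⟨3 * j, by omega⟩
      (Fin.mk_le_mk.mpr (by omega)) (Or.inr (Or.inl ⟨i, i.isLt, rfl, rfl⟩))
      (Fin.mk_le_mk.mpr (by omega))
    rw [Fin.lt_def, hJl, hJl] at this
    exact Fin.lt_def.mpr (by omega)
  · have := across ⟨3 * (n + r) + 2, by omega⟩ ⟨3 * (n + r + 1), by omega⟩
      ⟨3 * (n + r + 1) + 1, by omega⟩ ⟨3 * (n + r') + 2, by omega⟩ (Fin.mk_le_mk.mpr (by omega))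
      (Or.inr (Or.inr ⟨n + r + 1, by omega, by omega, rfl, rfl⟩)) (Fin.mk_le_mk.mpr (by omega))
    have hr := hJr (p.symm r)
    have hr' := hJr (p.symm r')
    simp only [Equiv.apply_symm_apply] at hr hr'
    rw [Fin.lt_def, hr, hr'] at this
    exact Fin.lt_def.mpr (by simp only [Function.comp_apply]; omega)


lemma exists_hom_of_blockMap {g : ℕ → ℕ} (hg : StrictMonoOn g (Set.Iio (2 * n)))
    (hperm : ∀ i : Fin n, ∃ J : Fin m, g i = J ∧ g (n + p i) = m + P J) :
    ∃ f : Fin (6 * n) → Fin (6 * m), Monotone f ∧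
      ∀ u v, (augMatching n p).Adj u v → (augMatching m P).Adj (f u) (f v) := by
  have hleft : ∀ c < n, g c < m := fun c hc => by
    obtain ⟨J, hJ, -⟩ := hperm ⟨c, hc⟩
    exact hJ ▸ J.isLt
  have hright : ∀ c, n ≤ c → c < 2 * n → m ≤ g c ∧ g c < 2 * m := fun c hc hc' => by
    obtain ⟨J, -, hJ⟩ := hperm (p.symm ⟨c - n, by omega⟩)
    rw [Equiv.apply_symm_apply, show n + (c - n) = c by omega] at hJ
    omega
  have hbound : ∀ v < 6 * n, blockMap g v < 6 * m := fun v hv => by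
    rw [blockMap_of_div_eq rfl]
    rcases lt_or_ge (v / 3) n with h | h
    · have := hleft _ h; omega
    · have := hright _ h (by omega); omega
  have hedge : ∀ u v : Fin (6 * n), BlockEdge n p u v → BlockEdge m P (blockMap g u) (blockMap g v) := by
    rintro u v (⟨i, hu, hv⟩ | ⟨c, hc, hu, hv⟩ | ⟨c, hc, hc', hu, hv⟩)
    · obtain ⟨J, hJl, hJr⟩ := hperm i
      rw [blockMap_of_div_eq (c := i) (by omega), blockMap_of_div_eq (c := n + p i) (by omega)]
      exact Or.inl ⟨J, by omega, by omega⟩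
    · rw [blockMap_of_div_eq (c := c) (by omega), blockMap_of_div_eq (c := c) (by omega)]
      exact Or.inr (Or.inl ⟨g c, hleft c hc, by omega, by omega⟩)
    · rw [blockMap_of_div_eq (c := c) (by omega), blockMap_of_div_eq (c := c) (by omega)]
      have := hright c hc hc'
      exact Or.inr (Or.inr ⟨g c, this.1, by omega, by omega, by omega⟩)
  refine ⟨fun v => ⟨blockMap g v, hbound v v.isLt⟩, fun v w hvw => ?_, fun u v huv => ?_⟩
  · exact Fin.mk_le_mk.mpr (blockMap_mono hg hvw (by omega))
  · rw [augMatching_adj_iff] at huv ⊢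
    exact huv.imp (hedge u v) (hedge v u)


lemma exists_hom_of_strictMono {φ : Fin n → Fin m} (hφ : StrictMono φ)
    (hψ : StrictMono (P ∘ φ ∘ p.symm)) :
    ∃ f : Fin (6 * n) → Fin (6 * m), Monotone f ∧
      ∀ u v, (augMatching n p).Adj u v → (augMatching m P).Adj (f u) (f v) := by
  let g : ℕ → ℕ := fun b =>
    if h : b < n then φ ⟨b, h⟩ else if h' : b - n < n then m + (P ∘ φ ∘ p.symm) ⟨b - n, h'⟩ else 0
  refine exists_hom_of_blockMap (g := g) (fun a ha b hb hab => ?_) fun i => ⟨φ i, by simp [g], ?_⟩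
  · simp only [Set.mem_Iio] at ha hb
    simp only [g]
    split_ifs <;> try omega
    · exact hφ (Fin.mk_lt_mk.mpr hab)
    · exact Nat.add_lt_add_left (hψ (Fin.mk_lt_mk.mpr (by omega))) m
  · simp [g]

end Homomorphism

theorem stmt1_general (n m : ℕ) (p : Equiv.Perm (Fin n)) (P : Equiv.Perm (Fin m)) :
    (∃ f : Fin (6 * n) → Fin (6 * m), Monotone f ∧
      ∀ u v : Fin (6 * n), (augMatching n p).Adj u v → (augMatching m P).Adj (f u) (f v)) ↔
    ContainsPattern P p := by
  rw [containsPattern_iff_exists_strictMono]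
  constructor
  · rintro ⟨f, hf, hadj⟩
    exact exists_strictMono_of_hom hf hadj
  · rintro ⟨φ, hφ, hψ⟩
    exact exists_hom_of_strictMono hφ hψ

/-- There is an ordered homomorphism `M'(p) → M'(P)` iff `P` contains `p` as a
pattern. -/
theorem stmt1 (n m : ℕ) (hnm : n ≤ m) (p : Equiv.Perm (Fin n)) (P : Equiv.Perm (Fin m)) :
    (∃ f : Fin (6 * n) → Fin (6 * m), Monotone f ∧
      ∀ u v : Fin (6 * n), (augMatching n p).Adj u v → (augMatching m P).Adj (f u) (f v)) ↔
    ContainsPattern P p :=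
  stmt1_general n m p P
end

section
/- An ordered matching that is an ordered core admits no ordered homomorphism to any ordered matching with strictly fewer edges. -/
/-!
Since a matching has twice as many vertices as edges, an ordered homomorphism `f` from `N` to a
matching with fewer edges is not injective. Choosing a preimage of the lower endpoint of every
edge in the image of `f`, and its partner as the preimage of the upper endpoint, gives a section
`s` of `f` compatible with the matchings; then `s ∘ f` is a monotone idempotent endomorphism of
`N` identifying two vertices, so it is a retraction onto a proper ordered subgraph.
-/

/-- An ordered matching: every vertex is incident to exactly one edge. -/
def IsOrderedMatching {V : Type*} (G : SimpleGraph V) : Prop :=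
  ∀ v : V, ∃! w : V, G.Adj v w

/-- An ordered core: an ordered graph admitting no ordered retraction to a
proper ordered subgraph (a subgraph different from the whole graph). -/
def IsOrderedCore {V : Type*} [LinearOrder V] (G : SimpleGraph V) : Prop :=
  ∀ H : G.Subgraph, H ≠ ⊤ →
    ¬ ∃ r : V → V, Monotone r ∧ (∀ x : V, r x ∈ H.verts) ∧
      (∀ u v : V, G.Adj u v → H.Adj (r u) (r v)) ∧ (∀ x ∈ H.verts, r x = x)

theorem Monotone.monotone_section_comp {α β : Type*} [LinearOrder α] [PartialOrder β]
    {f : α → β} {s : β → α} (hf : Monotone f) (hs : ∀ x, f (s (f x)) = f x) :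
    Monotone (s ∘ f) := by
  intro x y hxy
  rcases (hf hxy).eq_or_lt with heq | hlt
  · simp only [Function.comp_apply, heq, le_refl]
  · exact (hf.reflect_lt (by simpa only [Function.comp_apply, hs] using hlt)).le

namespace IsOrderedMatching

variable {V : Type*} {G : SimpleGraph V} (hG : IsOrderedMatching G)

noncomputable def partner (v : V) : V := (hG v).choose

include hG

theorem adj_partner (v : V) : G.Adj v (hG.partner v) := (hG v).choose_spec.1

theorem partner_eq_of_adj {v w : V} (h : G.Adj v w) : hG.partner v = w :=
  ((hG v).choose_spec.2 w h).symm

theorem partner_partner (v : V) : hG.partner (hG.partner v) = v :=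
  hG.partner_eq_of_adj (hG.adj_partner v).symm

theorem card_eq_two_mul_ncard_edgeSet [Fintype V] : Fintype.card V = 2 * G.edgeSet.ncard := by
  classical
  have hdeg : ∀ v, G.degree v = 1 := fun v => G.degree_eq_one_iff_existsUnique_adj.mpr (hG v)
  rw [← SimpleGraph.coe_edgeFinset, Set.ncard_coe_finset, ← G.sum_degrees_eq_twice_card_edges]
  simp [hdeg]

theorem map_partner {W : Type*} {M : SimpleGraph W} (hM : IsOrderedMatching M) {f : V → W}
    (hf : ∀ u v, G.Adj u v → M.Adj (f u) (f v)) (v : V) :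
    f (hG.partner v) = hM.partner (f v) :=
  (hM.partner_eq_of_adj (hf _ _ (hG.adj_partner v))).symm

end IsOrderedMatching

open Function in
theorem IsOrderedMatching.exists_partner_section {V W : Type*} [Nonempty V] [LinearOrder W]
    {N : SimpleGraph V} {M : SimpleGraph W} (hN : IsOrderedMatching N) (hM : IsOrderedMatching M)
    {f : V → W} (hf : ∀ u v, N.Adj u v → M.Adj (f u) (f v)) :
    ∃ s : W → V, ∀ v, f (s (f v)) = f v ∧ s (f (hN.partner v)) = hN.partner (s (f v)) := by
  let s : W → V := fun w =>
    if w < hM.partner w then invFun f w else hN.partner (invFun f (hM.partner w))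
  refine ⟨s, fun v => ?_⟩
  have hfp := hN.map_partner hM hf v
  have hinv : f (invFun f (f v)) = f v := invFun_eq ⟨v, rfl⟩
  have hinv' : f (invFun f (hM.partner (f v))) = hM.partner (f v) := invFun_eq ⟨_, hfp⟩
  have hqq := hM.partner_partner (f v)
  rcases (hM.adj_partner (f v)).ne.lt_or_gt with hlt | hgt
  · have hs : s (f v) = invFun f (f v) := if_pos hlt
    have hs' : s (hM.partner (f v)) = hN.partner (invFun f (f v)) := by
      simp only [s, hqq, if_neg hlt.not_gt]
    exact ⟨hs ▸ hinv, by rw [hfp, hs, hs']⟩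
  · have hs : s (f v) = hN.partner (invFun f (hM.partner (f v))) := if_neg hgt.not_gt
    have hs' : s (hM.partner (f v)) = invFun f (hM.partner (f v)) := by
      simp only [s, hqq, if_pos hgt]
    refine ⟨?_, by rw [hfp, hs, hs', hN.partner_partner]⟩
    rw [hs, hN.map_partner hM hf, hinv', hqq]

theorem IsOrderedCore.eq_self_of_idempotent {V : Type*} [LinearOrder V] {G : SimpleGraph V}
    (hG : IsOrderedCore G) {r : V → V} (hr_mono : Monotone r)
    (hr_hom : ∀ u v, G.Adj u v → G.Adj (r u) (r v)) (hr_idem : ∀ x, r (r x) = r x) (x : V) :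
    r x = x := by
  by_contra hx
  let H : G.Subgraph := (⊤ : G.Subgraph).induce (Set.range r)
  have hx_notMem : x ∉ H.verts := by
    rintro ⟨y, rfl⟩
    exact hx (hr_idem y)
  have hH : H ≠ ⊤ := fun h => hx_notMem (h ▸ trivial)
  refine hG H hH ⟨r, hr_mono, fun y => ⟨y, rfl⟩, fun u v huv => ?_, ?_⟩
  · exact ⟨⟨u, rfl⟩, ⟨v, rfl⟩, hr_hom u v huv⟩
  · rintro _ ⟨y, rfl⟩
    exact hr_idem y

/-- An ordered matching which is an ordered core admits no ordered
homomorphism to any ordered matching with strictly fewer edges. -/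
theorem stmt11 {V W : Type*} [LinearOrder V] [Fintype V] [LinearOrder W] [Fintype W]
    (N : SimpleGraph V) (M : SimpleGraph W)
    (hN : IsOrderedMatching N) (hNcore : IsOrderedCore N)
    (hM : IsOrderedMatching M)
    (hlt : M.edgeSet.ncard < N.edgeSet.ncard) :
    ¬ ∃ f : V → W, Monotone f ∧ ∀ u v : V, N.Adj u v → M.Adj (f u) (f v) := by
  rintro ⟨f, hf_mono, hf_hom⟩
  have hcard : Fintype.card W < Fintype.card V := by
    rw [hN.card_eq_two_mul_ncard_edgeSet, hM.card_eq_two_mul_ncard_edgeSet]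
    omega
  obtain ⟨x, y, hfxy, hxy⟩ := Function.not_injective_iff.mp fun hinj =>
    (Fintype.card_le_of_injective f hinj).not_gt hcard
  have : Nonempty V := ⟨x⟩
  obtain ⟨s, hs⟩ := hN.exists_partner_section hM hf_hom
  have hr : ∀ z, s (f z) = z := hNcore.eq_self_of_idempotent
    (hf_mono.monotone_section_comp fun z => (hs z).1)
    (fun u v huv => by
      rw [← hN.partner_eq_of_adj huv, (hs u).2]
      exact hN.adj_partner _)
    (fun z => by rw [(hs z).1])
  exact hxy (by rw [← hr x, ← hr y, hfxy])
end

section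
/- Let H_0 be a connected ordered graph with vertices u_1 < ⋯ < u_h that is an ordered core, and let G be an ordered graph that is a vertex-disjoint union of t copies of H_0, where for c ∈ [t] and k ∈ [h] the vertex v^c_k of the c-th copy corresponds to u_k. For k ∈ [h] set A_k = {v^1_k, …, v^t_k}. Then there exists an ordered homomorphism from G to H_0 if and only if, for every k ∈ [h], the set A_k is an interval in the linear ordering of V(G). -/
theorem exists_pos_pow_isIdempotentElem {M : Type*} [Monoid M] [Finite M] (a : M) :
    ∃ n, 0 < n ∧ IsIdempotentElem (a ^ n) := by
  obtain ⟨i, j, hij, hpow⟩ : ∃ i j, i < j ∧ a ^ i = a ^ j := by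
    obtain ⟨i, j, hne, h⟩ := Finite.exists_ne_map_eq_of_infinite (a ^ · : ℕ → M)
    rcases hne.lt_or_gt with hlt | hlt
    exacts [⟨i, j, hlt, h⟩, ⟨j, i, hlt, h.symm⟩]
  have periodic : ∀ k m, i ≤ m → a ^ (m + k * (j - i)) = a ^ m := by
    intro k m hm
    induction k with
    | zero => simp
    | succ k ih =>
      calc a ^ (m + (k + 1) * (j - i)) = a ^ (m + k * (j - i) - i) * a ^ j := by
            rw [← pow_add, add_one_mul]; congr 1; omega
        _ = a ^ m := by rw [← hpow, ← pow_add, Nat.sub_add_cancel (by omega), ih]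
  have hi : i ≤ (i + 1) * (j - i) := (Nat.le_succ i).trans (Nat.le_mul_of_pos_right _ (by omega))
  refine ⟨(i + 1) * (j - i), Nat.mul_pos (by omega) (by omega), ?_⟩
  rw [IsIdempotentElem, ← pow_add, periodic _ _ hi]

theorem RelHom.coe_pow {α : Type*} {r : α → α → Prop} (f : r →r r) (n : ℕ) :
    ⇑(f ^ n) = f^[n] := by
  induction n with
  | zero => rfl
  | succ n ih => rw [pow_succ, coe_mul, ih, Function.iterate_succ]

theorem Monotone.eq_id_of_iterate_eq_id {α : Type*} [LinearOrder α] {g : α → α} (hg : Monotone g)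
    {n : ℕ} (hn : 0 < n) (h : g^[n] = id) : g = id := by
  funext x
  have hlt := (Function.Commute.id_right (f := g)).iterate_pos_lt_iff_map_lt hg strictMono_id
    (x := x) hn
  have hgt := (Function.Commute.id_left (f := g)).iterate_pos_lt_iff_map_lt' strictMono_id hg
    (x := x) hn
  simp only [h, Function.iterate_id, id, lt_self_iff_false, false_iff] at hlt hgt
  exact (not_lt.1 hgt).antisymm (not_lt.1 hlt)

namespace IsOrderedCore

variable {V : Type*} [LinearOrder V] {G : SimpleGraph V}

theorem eq_id_of_isIdempotentElem (hG : IsOrderedCore G) {φ : G →g G} (hmono : Monotone φ)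
    (hidem : IsIdempotentElem φ) : ⇑φ = id := by
  have fix : ∀ x, φ (φ x) = φ x := fun x => DFunLike.congr_fun hidem x
  have image_eq_top : (⊤ : G.Subgraph).map φ = ⊤ := by
    by_contra hne
    refine hG _ hne ⟨φ, hmono, fun x => ⟨x, trivial, rfl⟩, fun u w huw => ⟨u, w, huw, rfl, rfl⟩, ?_⟩
    rintro _ ⟨y, -, rfl⟩
    exact fix y
  funext x
  obtain ⟨y, -, rfl⟩ : x ∈ ((⊤ : G.Subgraph).map φ).verts := by rw [image_eq_top]; trivial
  exact fix y

theorem eq_id [Finite V] (hG : IsOrderedCore G) {φ : G →g G} (hmono : Monotone φ) : ⇑φ = id := by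
  have : Finite (G →g G) := DFunLike.finite _
  obtain ⟨n, hn, hidem⟩ := exists_pos_pow_isIdempotentElem φ
  have hmono_pow : Monotone ⇑(φ ^ n) := by rw [RelHom.coe_pow]; exact hmono.iterate n
  have := hG.eq_id_of_isIdempotentElem hmono_pow hidem
  rw [RelHom.coe_pow] at this
  exact hmono.eq_id_of_iterate_eq_id hn this

end IsOrderedCore

theorem stmt13_general {V : Type*} [LinearOrder V] (h t : ℕ) (H₀ : SimpleGraph (Fin h))
    (hcore : IsOrderedCore H₀)
    (G : SimpleGraph V) (v : Fin t → Fin h → V)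
    (hinj : Function.Injective (fun q : Fin t × Fin h => v q.1 q.2))
    (hsurj : ∀ x : V, ∃ c k, x = v c k)
    (hadj : ∀ c c' k k', G.Adj (v c k) (v c' k') ↔ c = c' ∧ H₀.Adj k k')
    (horder : ∀ (c : Fin t) (k k' : Fin h), v c k < v c k' ↔ k < k') :
    (∃ f : V → Fin h, Monotone f ∧ ∀ x y : V, G.Adj x y → H₀.Adj (f x) (f y)) ↔
    (∀ k : Fin h, ∀ (c c' : Fin t) (x : V),
      v c k ≤ x → x ≤ v c' k → ∃ c'' : Fin t, x = v c'' k) := by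
  constructor
  · rintro ⟨f, hf, hhom⟩ k c c' x hlo hhi
    have layer : ∀ c k, f (v c k) = k := fun c => congrFun <|
      hcore.eq_id (φ := ⟨f ∘ v c, fun hab => hhom _ _ ((hadj c c _ _).2 ⟨rfl, hab⟩)⟩)
        (hf.comp (StrictMono.monotone fun _ _ => (horder c _ _).2))
    obtain ⟨d, j, rfl⟩ := hsurj x
    have hkj : k ≤ j := by simpa only [layer] using hf hlo
    have hjk : j ≤ k := by simpa only [layer] using hf hhi
    exact ⟨d, by rw [le_antisymm hjk hkj]⟩
  · intro hint
    let e := Equiv.ofBijective _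
      ⟨hinj, fun x => by obtain ⟨c, k, rfl⟩ := hsurj x; exact ⟨(c, k), rfl⟩⟩
    have layer : ∀ c k, (e.symm (v c k)).2 = k := fun c k => by
      rw [show v c k = e (c, k) from rfl, e.symm_apply_apply]
    refine ⟨fun x => (e.symm x).2, ?_, ?_⟩
    · intro x y hxy
      obtain ⟨c, k, rfl⟩ := hsurj x
      obtain ⟨c', j, rfl⟩ := hsurj y
      simp only [layer]
      by_contra! hjk
      obtain ⟨c'', hc''⟩ := hint k c c' (v c' j) hxy ((horder c' j k).2 hjk).le
      exact hjk.ne (congrArg Prod.snd (hinj (a₁ := (c', j)) (a₂ := (c'', k)) hc''))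
    · intro x y hxy
      obtain ⟨c, k, rfl⟩ := hsurj x
      obtain ⟨c', j, rfl⟩ := hsurj y
      simpa only [layer] using ((hadj c c' k j).1 hxy).2

/-- Let `H₀` be a connected ordered core on vertices `u_1 < ⋯ < u_h` (modelled
on `Fin h`), and let `G` be an ordered graph that is a vertex-disjoint union of
`t` copies of `H₀`, the vertex `v c k` of the `c`-th copy corresponding to
`u_k` (so `v` is a bijection onto `V(G)`, adjacency holds exactly inside copies
according to `H₀`, and each copy carries the vertex order of `H₀`).  Setting
`A k = {v c k | c ∈ [t]}`, there is an ordered homomorphism `G → H₀` iff every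
`A k` is an interval in the linear order on `V(G)`. -/
theorem stmt13 {V : Type*} [LinearOrder V] (h t : ℕ) (H₀ : SimpleGraph (Fin h))
    (hconn : H₀.Connected) (hcore : IsOrderedCore H₀)
    (G : SimpleGraph V) (v : Fin t → Fin h → V)
    (hinj : Function.Injective (fun q : Fin t × Fin h => v q.1 q.2))
    (hsurj : ∀ x : V, ∃ c k, x = v c k)
    (hadj : ∀ c c' k k', G.Adj (v c k) (v c' k') ↔ c = c' ∧ H₀.Adj k k')
    (horder : ∀ (c : Fin t) (k k' : Fin h), v c k < v c k' ↔ k < k') :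
    (∃ f : V → Fin h, Monotone f ∧ ∀ x y : V, G.Adj x y → H₀.Adj (f x) (f y)) ↔
    (∀ k : Fin h, ∀ (c c' : Fin t) (x : V),
      v c k ≤ x → x ≤ v c' k → ∃ c'' : Fin t, x = v c'' k) :=
  stmt13_general h t H₀ hcore G v hinj hsurj hadj horder
end

section
/- Every ordered graph is homomorphically equivalent to an ordered core, and this ordered core is unique up to order-isomorphism. -/
/-- Homomorphic equivalence of ordered graphs: each admits an ordered
homomorphism to the other. -/
def OrderedHomEquiv {V W : Type*} [Preorder V] [Preorder W]
    (G : SimpleGraph V) (H : SimpleGraph W) : Prop :=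
  (∃ f : V → W, Monotone f ∧ ∀ u v : V, G.Adj u v → H.Adj (f u) (f v)) ∧
  (∃ g : W → V, Monotone g ∧ ∀ u v : W, H.Adj u v → G.Adj (g u) (g v))

theorem Function.exists_pos_iterate_idempotent {α : Type*} [Finite α] (f : α → α) :
    ∃ n, 0 < n ∧ f^[n] ∘ f^[n] = f^[n] :=
  haveI : Finite (Function.End α) := inferInstanceAs (Finite (α → α))
  exists_pos_pow_isIdempotentElem (M := Function.End α) f

section OrderedHom

variable {V W X : Type*} [Preorder V] [Preorder W] [Preorder X]
  {G : SimpleGraph V} {H : SimpleGraph W} {K : SimpleGraph X}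

def IsOrderedHom (G : SimpleGraph V) (H : SimpleGraph W) (f : V → W) : Prop :=
  Monotone f ∧ ∀ u v, G.Adj u v → H.Adj (f u) (f v)

theorem orderedHomEquiv_iff :
    OrderedHomEquiv G H ↔ (∃ f, IsOrderedHom G H f) ∧ ∃ g, IsOrderedHom H G g :=
  Iff.rfl

theorem IsOrderedHom.id : IsOrderedHom G G id :=
  ⟨monotone_id, fun _ _ h ↦ h⟩

theorem IsOrderedHom.comp {f : V → W} {g : W → X} (hg : IsOrderedHom H K g)
    (hf : IsOrderedHom G H f) : IsOrderedHom G K (g ∘ f) :=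
  ⟨hg.1.comp hf.1, fun _ _ h ↦ hg.2 _ _ (hf.2 _ _ h)⟩

theorem IsOrderedHom.iterate {f : V → V} (hf : IsOrderedHom G G f) :
    ∀ n, IsOrderedHom G G f^[n]
  | 0 => .id
  | n + 1 => by rw [Function.iterate_succ]; exact (hf.iterate n).comp hf

theorem OrderedHomEquiv.symm (h : OrderedHomEquiv G H) : OrderedHomEquiv H G :=
  And.symm h

theorem OrderedHomEquiv.trans (h₁ : OrderedHomEquiv G H) (h₂ : OrderedHomEquiv H K) :
    OrderedHomEquiv G K := by
  obtain ⟨⟨f, hf⟩, ⟨g, hg⟩⟩ := orderedHomEquiv_iff.1 h₁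
  obtain ⟨⟨f', hf'⟩, ⟨g', hg'⟩⟩ := orderedHomEquiv_iff.1 h₂
  exact ⟨⟨f' ∘ f, hf'.comp hf⟩, ⟨g ∘ g', hg.comp hg'⟩⟩

theorem isOrderedHom_orderIso_comap (e : W ≃o V) : IsOrderedHom (G.comap e) G e :=
  ⟨e.monotone, fun _ _ h ↦ h⟩

theorem isOrderedHom_orderIso_symm_comap (e : W ≃o V) :
    IsOrderedHom G (G.comap e) e.symm :=
  ⟨e.symm.monotone, fun u v h ↦ by simpa using h⟩

theorem orderedHomEquiv_comap_orderIso (e : W ≃o V) : OrderedHomEquiv G (G.comap e) :=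
  ⟨⟨_, isOrderedHom_orderIso_symm_comap e⟩, ⟨_, isOrderedHom_orderIso_comap e⟩⟩

theorem orderedHomEquiv_induce_range {h : V → V} (hh : IsOrderedHom G G h) :
    OrderedHomEquiv G (G.induce (Set.range h)) :=
  ⟨⟨Set.rangeFactorization h, fun _ _ hab ↦ hh.1 hab, hh.2⟩,
    ⟨Subtype.val, Subtype.mono_coe _, fun _ _ hab ↦ hab⟩⟩

end OrderedHom

section OrderedCore

variable {V W : Type*} [LinearOrder V] [LinearOrder W] {G : SimpleGraph V}

theorem IsOrderedCore.eq_id_of_isOrderedHom [Finite V] (hG : IsOrderedCore G) {h : V → V}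
    (hh : IsOrderedHom G G h) : h = id := by
  obtain ⟨n, hn, hidem⟩ := Function.exists_pos_iterate_idempotent h
  have hr := hh.iterate n
  have himage : (⊤ : G.Subgraph).map ⟨h^[n], hr.2 _ _⟩ = ⊤ := by
    by_contra hne
    refine hG _ hne ⟨h^[n], hr.1, fun x ↦ ⟨x, trivial, rfl⟩,
      fun u v huv ↦ ⟨u, v, huv, rfl, rfl⟩, ?_⟩
    rintro _ ⟨x, -, rfl⟩
    exact congrFun hidem x
  have hr_surj : Function.Surjective h^[n] := fun x ↦ by
    obtain ⟨y, -, hy⟩ : x ∈ ((⊤ : G.Subgraph).map ⟨h^[n], hr.2 _ _⟩).verts := by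
      rw [himage]; trivial
    exact ⟨y, hy⟩
  have hh_inj : Function.Injective h := by
    obtain ⟨m, rfl⟩ := Nat.exists_eq_succ_of_ne_zero hn.ne'
    have hr_inj := Finite.injective_iff_surjective.mpr hr_surj
    rw [Function.iterate_succ] at hr_inj
    exact hr_inj.of_comp
  exact (hh.1.strictMono_of_injective hh_inj).eq_id

theorem isOrderedCore_of_forall_eq_id (hG : ∀ h, IsOrderedHom G G h → h = id) :
    IsOrderedCore G := by
  rintro H hne ⟨r, hr_mono, hr_mem, hr_adj, -⟩
  have hr : r = id := hG r ⟨hr_mono, fun u v huv ↦ H.adj_sub (hr_adj u v huv)⟩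
  subst hr
  refine hne (le_antisymm le_top ⟨fun x _ ↦ hr_mem x, fun u v huv ↦ hr_adj u v huv⟩)

theorem isOrderedCore_iff_forall_eq_id [Finite V] :
    IsOrderedCore G ↔ ∀ h, IsOrderedHom G G h → h = id :=
  ⟨fun hG _ ↦ hG.eq_id_of_isOrderedHom, isOrderedCore_of_forall_eq_id⟩

theorem IsOrderedCore.comap_orderIso [Finite V] (hG : IsOrderedCore G) (e : W ≃o V) :
    IsOrderedCore (G.comap e) := by
  refine isOrderedCore_of_forall_eq_id fun h hh ↦ funext fun x ↦ ?_
  have hconj := hG.eq_id_of_isOrderedHom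
    (((isOrderedHom_orderIso_comap e).comp hh).comp (isOrderedHom_orderIso_symm_comap e))
  simpa using congrFun hconj (e x)

theorem IsOrderedCore.exists_orderIso_of_orderedHomEquiv [Finite V] [Finite W]
    {C : SimpleGraph W} (hG : IsOrderedCore G) (hC : IsOrderedCore C)
    (hGC : OrderedHomEquiv G C) : ∃ e : V ≃o W, ∀ a b, G.Adj a b ↔ C.Adj (e a) (e b) := by
  obtain ⟨⟨f, hf⟩, ⟨g, hg⟩⟩ := orderedHomEquiv_iff.1 hGC
  have hgf : ∀ x, g (f x) = x := congrFun (hG.eq_id_of_isOrderedHom (hg.comp hf))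
  have hfg : ∀ y, f (g y) = y := congrFun (hC.eq_id_of_isOrderedHom (hf.comp hg))
  let e : V ≃ W := ⟨f, g, hgf, hfg⟩
  refine ⟨e.toOrderIso hf.1 hg.1, fun a b ↦ ⟨hf.2 a b, fun hab ↦ ?_⟩⟩
  simpa [e, hgf] using hg.2 _ _ hab

theorem exists_isOrderedHom_not_surjective_of_not_isOrderedCore [Finite V]
    (hG : ¬IsOrderedCore G) : ∃ h, IsOrderedHom G G h ∧ ¬Function.Surjective h := by
  simp only [isOrderedCore_iff_forall_eq_id, not_forall] at hG
  obtain ⟨h, hh, hne⟩ := hG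
  refine ⟨h, hh, fun hsurj ↦ hne ?_⟩
  exact (hh.1.strictMono_of_injective (Finite.injective_iff_surjective.2 hsurj)).eq_id

theorem exists_isOrderedCore_fin_orderedHomEquiv [Finite V] (G : SimpleGraph V) :
    ∃ (n : ℕ) (C : SimpleGraph (Fin n)), IsOrderedCore C ∧ OrderedHomEquiv G C := by
  induction hcard : Nat.card V using Nat.strong_induction_on generalizing V with
  | _ N ih =>
  by_cases hG : IsOrderedCore G
  · let _ := Fintype.ofFinite V
    let e := monoEquivOfFin V rfl
    exact ⟨_, G.comap e, hG.comap_orderIso e, orderedHomEquiv_comap_orderIso e⟩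
  obtain ⟨h, hh, hnsurj⟩ := exists_isOrderedHom_not_surjective_of_not_isOrderedCore hG
  obtain ⟨x, hx⟩ := not_forall.1 hnsurj
  obtain ⟨n, C, hC, hequiv⟩ :=
    ih _ (hcard ▸ Finite.card_subtype_lt (p := (· ∈ Set.range h)) hx) (G.induce (Set.range h)) rfl
  exact ⟨n, C, hC, (orderedHomEquiv_induce_range hh).trans hequiv⟩

end OrderedCore

/-- Every (finite) ordered graph is homomorphically equivalent to an ordered
core, and this ordered core is unique up to order-isomorphism. -/
theorem stmt15 {V : Type} [LinearOrder V] [Fintype V] (G : SimpleGraph V) :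
    (∃ (n : ℕ) (C : SimpleGraph (Fin n)), IsOrderedCore C ∧ OrderedHomEquiv G C) ∧
    (∀ (U₁ U₂ : Type) (_ : LinearOrder U₁) (_ : Fintype U₁)
       (_ : LinearOrder U₂) (_ : Fintype U₂)
       (C₁ : SimpleGraph U₁) (C₂ : SimpleGraph U₂),
       IsOrderedCore C₁ → OrderedHomEquiv G C₁ →
       IsOrderedCore C₂ → OrderedHomEquiv G C₂ →
       ∃ e : U₁ ≃o U₂, ∀ a b : U₁, C₁.Adj a b ↔ C₂.Adj (e a) (e b)) :=
  ⟨exists_isOrderedCore_fin_orderedHomEquiv G,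
    fun _ _ _ _ _ _ _ _ hC₁ hGC₁ hC₂ hGC₂ ↦
      hC₁.exists_orderIso_of_orderedHomEquiv hC₂ (hGC₁.symm.trans hGC₂)⟩
end

section
/- If an ordered graph G without isolated vertices admits an ordered homomorphism to some ordered matching, then the ordered core of G is an ordered matching. -/
/-!
Compose the homomorphisms to get a monotone homomorphism `φ` from the core `C` to the matching.
Over every edge of the matching hit by `φ`, pick one edge of `C` lying above it and send each
vertex of `C` to the endpoint of that edge in its own fibre. This is a monotone idempotent
endomorphism of `C`, so, `C` being a core, it is the identity: `φ` is injective. Since `C` has no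
isolated vertex (one could be merged into the vertex next to it in the order), injectivity into a
matching forces every vertex of `C` to have exactly one neighbour.
-/

section CoveringUpdate

variable {U : Type} [LinearOrder U]

theorem exists_covBy_or_covBy_of_ne [Finite U] {x z : U} (hz : z ≠ x) :
    ∃ y, x ⋖ y ∨ y ⋖ x := by
  rcases hz.lt_or_gt with hzx | hxz
  · obtain ⟨y, hy⟩ := exists_covBy_of_wellFoundedGT (not_isMin_iff.2 ⟨z, hzx⟩)
    exact ⟨y, Or.inr hy⟩
  · obtain ⟨y, hy⟩ := exists_covBy_of_wellFoundedLT (not_isMax_iff.2 ⟨z, hxz⟩)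
    exact ⟨y, Or.inl hy⟩

theorem monotone_update_id_of_covBy {x y : U} (hxy : x ⋖ y ∨ y ⋖ x) :
    Monotone (Function.update id x y) := by
  intro s t hst
  simp only [Function.update_apply, id]
  split_ifs with hs ht ht
  · rfl
  · rw [hs] at hst
    rcases hxy with h | h
    · exact h.ge_of_gt (hst.lt_of_ne' ht)
    · exact (h.lt.trans (hst.lt_of_ne' ht)).le
  · rw [ht] at hst
    rcases hxy with h | h
    · exact ((hst.lt_of_ne hs).trans h.lt).le
    · exact h.le_of_lt (hst.lt_of_ne hs)
  · exact hst

end CoveringUpdate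

namespace IsOrderedCore

variable {U : Type} [LinearOrder U] {C : SimpleGraph U}

theorem eq_id_of_idempotent (hC : IsOrderedCore C) {r : U → U} (hmono : Monotone r)
    (hhom : ∀ u v, C.Adj u v → C.Adj (r u) (r v)) (hidem : ∀ x, r (r x) = r x) :
    r = id := by
  by_contra hr
  obtain ⟨x, hx⟩ : ∃ x, r x ≠ x := by simpa [funext_iff] using hr
  refine hC ((⊤ : C.Subgraph).induce (Set.range r)) ?_
    ⟨r, hmono, Set.mem_range_self, fun u v huv => ⟨⟨u, rfl⟩, ⟨v, rfl⟩, hhom u v huv⟩, ?_⟩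
  · intro htop
    have hxr : x ∈ Set.range r := by
      rw [← SimpleGraph.Subgraph.induce_verts (⊤ : C.Subgraph) (Set.range r), htop]
      trivial
    obtain ⟨y, rfl⟩ := hxr
    exact hx (hidem y)
  · rintro _ ⟨y, rfl⟩
    exact hidem y

theorem exists_adj_of_adj [Finite U] (hC : IsOrderedCore C) {a b : U} (hab : C.Adj a b) (x : U) :
    ∃ y, C.Adj x y := by
  by_contra! hx
  obtain ⟨z, hz⟩ : ∃ z, z ≠ x := (eq_or_ne a x).elim (fun h => ⟨b, h ▸ hab.ne'⟩) fun h => ⟨a, h⟩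
  obtain ⟨y, hcov⟩ := exists_covBy_or_covBy_of_ne hz
  have hyx : y ≠ x := by rcases hcov with h | h <;> [exact h.lt.ne'; exact h.lt.ne]
  have hid := hC.eq_id_of_idempotent (monotone_update_id_of_covBy hcov) ?_ ?_
  · exact hyx (by simpa using congrFun hid x)
  · intro u v huv
    have hu : u ≠ x := by rintro rfl; exact hx v huv
    have hv : v ≠ x := by rintro rfl; exact hx u huv.symm
    rwa [Function.update_of_ne hu, Function.update_of_ne hv]
  · intro t
    rcases eq_or_ne t x with rfl | ht
    · simp [hyx]
    · simp [ht]

end IsOrderedCore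

section Fibrewise

variable {U W : Type} {C : SimpleGraph U} {M : SimpleGraph W} {φ : U → W}

theorem monotone_comp_of_section [LinearOrder U] [PartialOrder W] (hφ : Monotone φ)
    {s : W → U} (hs : ∀ x, φ (s (φ x)) = φ x) : Monotone (s ∘ φ) := by
  intro x y hxy
  by_contra! hlt
  have hyx : φ y ≤ φ x := by simpa only [Function.comp, hs] using hφ hlt.le
  exact hlt.ne (by simp only [Function.comp, le_antisymm (hφ hxy) hyx])

theorem exists_section_of_hom_to_matching [Nonempty U] [LinearOrder W]
    (hM : IsOrderedMatching M) (hφ : ∀ x y, C.Adj x y → M.Adj (φ x) (φ y))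
    (hC : ∀ x, ∃ y, C.Adj x y) :
    ∃ s : W → U, (∀ x, φ (s (φ x)) = φ x) ∧ ∀ x y, C.Adj x y → C.Adj (s (φ x)) (s (φ y)) := by
  classical
  choose p hp using fun w => (hM w).exists
  have hp_eq : ∀ {w z}, M.Adj w z → p w = z := fun h => (hM _).unique (hp _) h
  -- Over each edge `w < p w` of `M` choose one edge of `C`; both endpoints read it off.
  let P : W → U × U → Prop := fun w q => C.Adj q.1 q.2 ∧ φ q.1 = w ∧ φ q.2 = p w
  let e : W → U × U := fun w => Classical.epsilon (P w)
  let s : W → U := fun w => if w < p w then (e w).1 else (e (p w)).2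
  have key : ∀ x y, C.Adj x y → φ x < φ y →
      C.Adj (s (φ x)) (s (φ y)) ∧ φ (s (φ x)) = φ x ∧ φ (s (φ y)) = φ y := by
    intro x y hxy hlt
    have hpx : p (φ x) = φ y := hp_eq (hφ x y hxy)
    have hpy : p (φ y) = φ x := hp_eq (hφ y x hxy.symm)
    have he : P (φ x) (e (φ x)) := Classical.epsilon_spec ⟨(x, y), hxy, rfl, hpx.symm⟩
    have hsx : s (φ x) = (e (φ x)).1 := if_pos (hpx ▸ hlt)
    have hsy : s (φ y) = (e (φ x)).2 := by simp only [s, hpy, if_neg hlt.not_gt]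
    rw [hsx, hsy, ← hpx]
    exact he
  refine ⟨s, fun x => ?_, fun x y hxy => ?_⟩
  · obtain ⟨y, hxy⟩ := hC x
    rcases (hφ x y hxy).ne.lt_or_gt with hlt | hlt
    · exact (key x y hxy hlt).2.1
    · exact (key y x hxy.symm hlt).2.2
  · rcases (hφ x y hxy).ne.lt_or_gt with hlt | hlt
    · exact (key x y hxy hlt).1
    · exact (key y x hxy.symm hlt).1.symm

theorem IsOrderedCore.injective_of_hom_to_matching [LinearOrder U] [LinearOrder W]
    (hC : IsOrderedCore C) (hM : IsOrderedMatching M) (hφm : Monotone φ)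
    (hφ : ∀ x y, C.Adj x y → M.Adj (φ x) (φ y)) (hadj : ∀ x, ∃ y, C.Adj x y) :
    Function.Injective φ := by
  intro x y hxy
  have : Nonempty U := ⟨x⟩
  obtain ⟨s, hs, hs_adj⟩ := exists_section_of_hom_to_matching hM hφ hadj
  have hid : s ∘ φ = id :=
    hC.eq_id_of_idempotent (monotone_comp_of_section hφm hs) hs_adj fun x => congrArg s (hs x)
  calc x = s (φ x) := (congrFun hid x).symm
    _ = s (φ y) := by rw [hxy]
    _ = y := congrFun hid y

end Fibrewise

theorem stmt17_general {V W : Type} [LinearOrder V] [LinearOrder W]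
    (G : SimpleGraph V) (hiso : ∀ x : V, ∃ y : V, G.Adj x y)
    (M : SimpleGraph W) (hM : IsOrderedMatching M)
    (f : V → W) (hmono : Monotone f)
    (hhom : ∀ u v : V, G.Adj u v → M.Adj (f u) (f v)) :
    ∀ (U : Type) (_ : LinearOrder U) (_ : Fintype U) (C : SimpleGraph U),
      IsOrderedCore C → OrderedHomEquiv G C → IsOrderedMatching C := by
  rintro U _ _ C hC ⟨⟨f', -, hf'⟩, ⟨g, hg_mono, hg⟩⟩
  have hadj : ∀ x, ∃ y, C.Adj x y := fun x => by
    obtain ⟨y, hy⟩ := hiso (g x)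
    exact hC.exists_adj_of_adj (hf' _ _ hy) x
  have hinj : Function.Injective (f ∘ g) :=
    hC.injective_of_hom_to_matching hM (hmono.comp hg_mono) (fun x y h => hhom _ _ (hg x y h)) hadj
  intro u
  obtain ⟨v, hv⟩ := hadj u
  exact ⟨v, hv, fun w hw => hinj ((hM _).unique (hhom _ _ (hg _ _ hw)) (hhom _ _ (hg _ _ hv)))⟩

/-- If an ordered graph `G` without isolated vertices admits an ordered
homomorphism to some ordered matching, then the ordered core of `G` (i.e. any
ordered core homomorphically equivalent to `G`) is an ordered matching. -/
theorem stmt17 {V W : Type} [LinearOrder V] [Fintype V] [LinearOrder W]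
    (G : SimpleGraph V) (hiso : ∀ x : V, ∃ y : V, G.Adj x y)
    (M : SimpleGraph W) (hM : IsOrderedMatching M)
    (f : V → W) (hmono : Monotone f)
    (hhom : ∀ u v : V, G.Adj u v → M.Adj (f u) (f v)) :
    ∀ (U : Type) (_ : LinearOrder U) (_ : Fintype U) (C : SimpleGraph U),
      IsOrderedCore C → OrderedHomEquiv G C → IsOrderedMatching C :=
  stmt17_general G hiso M hM f hmono hhom
end

section
/- Let G be an ordered graph and let S and T be disjoint independent intervals of V(G) with every vertex of S smaller than every vertex of T, such that every edge of G incident to a vertex of S ∪ T has one endpoint in S and the other in T, and suppose there exist x ∈ S and y ∈ T with xy an edge of G. Then the map that fixes every vertex outside S ∪ T, sends every vertex of S to x, and sends every vertex of T to y is an ordered retraction of G onto the ordered subgraph of G induced by (V(G) ∖ (S ∪ T)) ∪ {x, y}. -/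
/-!
Collapsing an interval onto one of its points is monotone, and the map of the theorem is the
composite of the collapses of `S` onto `x` and of `T` onto `y`. Every edge meeting `S ∪ T` goes
between `S` and `T`, so it is sent to the edge `xy`; all other edges are fixed.
-/

theorem Set.OrdConnected.monotone_ite_mem {V : Type*} [LinearOrder V] {S : Set V}
    [DecidablePred (· ∈ S)] (hS : S.OrdConnected) {x : V} (hx : x ∈ S) :
    Monotone fun v => if v ∈ S then x else v := by
  intro u v huv
  dsimp only
  split_ifs with hu hv hv
  · exact le_rfl
  · by_contra! hvx
    exact hv (hS.out hu hx ⟨huv, hvx.le⟩)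
  · by_contra! hxu
    exact hu (hS.out hx hv ⟨hxu.le, huv⟩)
  · exact huv

section Collapse

variable {V : Type*} (S T : Set V) [DecidablePred (· ∈ S)] [DecidablePred (· ∈ T)] (x y : V)

def collapsePair (v : V) : V :=
  if v ∈ S then x else if v ∈ T then y else v

variable {S T x y}

theorem collapsePair_of_mem_left {v : V} (hv : v ∈ S) : collapsePair S T x y v = x :=
  if_pos hv

theorem collapsePair_of_mem_right {v : V} (hvS : v ∉ S) (hvT : v ∈ T) :
    collapsePair S T x y v = y := by
  simp only [collapsePair, hvS, hvT, if_false, if_true]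

theorem collapsePair_of_notMem {v : V} (hv : v ∉ S ∪ T) : collapsePair S T x y v = v := by
  simp only [Set.mem_union, not_or] at hv
  simp only [collapsePair, hv.1, hv.2, if_false]

theorem collapsePair_mem (v : V) :
    collapsePair S T x y v ∈ (Set.univ \ (S ∪ T)) ∪ {x, y} := by
  by_cases hvS : v ∈ S
  · simp [collapsePair_of_mem_left hvS]
  by_cases hvT : v ∈ T
  · simp [collapsePair_of_mem_right hvS hvT]
  · have hv : v ∉ S ∪ T := by simp [hvS, hvT]
    simp [collapsePair_of_notMem hv, hv]

theorem collapsePair_eq_self (hx : x ∈ S) (hyS : y ∉ S) :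
    ∀ v ∈ (Set.univ \ (S ∪ T)) ∪ ({x, y} : Set V), collapsePair S T x y v = v := by
  rintro v (⟨-, hv⟩ | rfl | rfl)
  · exact collapsePair_of_notMem hv
  · exact collapsePair_of_mem_left hx
  · simp only [collapsePair, hyS, if_false, ite_self]

theorem collapsePair_eq_comp (hxT : x ∉ T) :
    collapsePair S T x y =
      (fun v => if v ∈ T then y else v) ∘ (fun v => if v ∈ S then x else v) := by
  ext v
  by_cases hvS : v ∈ S <;> simp [collapsePair, hvS, hxT]

theorem monotone_collapsePair [LinearOrder V] (hS : S.OrdConnected) (hT : T.OrdConnected)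
    (hx : x ∈ S) (hy : y ∈ T) (hxT : x ∉ T) : Monotone (collapsePair S T x y) := by
  rw [collapsePair_eq_comp hxT]
  exact (hT.monotone_ite_mem hy).comp (hS.monotone_ite_mem hx)

theorem adj_collapsePair {G : SimpleGraph V} (hdisj : Disjoint S T)
    (hedge : ∀ u v : V, G.Adj u v → u ∈ S ∪ T → (u ∈ S ∧ v ∈ T) ∨ (u ∈ T ∧ v ∈ S))
    (hxy : G.Adj x y) {u v : V} (huv : G.Adj u v) :
    G.Adj (collapsePair S T x y u) (collapsePair S T x y v) := by
  by_cases hu : u ∈ S ∪ T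
  · rcases hedge u v huv hu with ⟨huS, hvT⟩ | ⟨huT, hvS⟩
    · rwa [collapsePair_of_mem_left huS,
        collapsePair_of_mem_right (hdisj.notMem_of_mem_right hvT) hvT]
    · rw [collapsePair_of_mem_right (hdisj.notMem_of_mem_right huT) huT,
        collapsePair_of_mem_left hvS]
      exact hxy.symm
  · have hv : v ∉ S ∪ T := fun hv => by
      rcases hedge v u huv.symm hv with ⟨-, huT⟩ | ⟨-, huS⟩
      exacts [hu (Or.inr huT), hu (Or.inl huS)]
    rwa [collapsePair_of_notMem hu, collapsePair_of_notMem hv]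

end Collapse

theorem stmt18_general {V : Type*} [LinearOrder V] (G : SimpleGraph V) (S T : Set V)
    [DecidablePred (· ∈ S)] [DecidablePred (· ∈ T)]
    (hSint : ∀ a b c : V, a ∈ S → c ∈ S → a ≤ b → b ≤ c → b ∈ S)
    (hTint : ∀ a b c : V, a ∈ T → c ∈ T → a ≤ b → b ≤ c → b ∈ T)
    (hST : ∀ s ∈ S, ∀ t ∈ T, s < t)
    (hedge : ∀ u v : V, G.Adj u v → u ∈ S ∪ T →
      (u ∈ S ∧ v ∈ T) ∨ (u ∈ T ∧ v ∈ S))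
    (x : V) (hx : x ∈ S) (y : V) (hy : y ∈ T) (hxy : G.Adj x y) :
    Monotone (fun v : V => if v ∈ S then x else if v ∈ T then y else v) ∧
    (∀ v : V, (if v ∈ S then x else if v ∈ T then y else v) ∈
        (Set.univ \ (S ∪ T)) ∪ {x, y}) ∧
    (∀ u v : V, G.Adj u v →
      G.Adj (if u ∈ S then x else if u ∈ T then y else u)
        (if v ∈ S then x else if v ∈ T then y else v)) ∧
    (∀ v ∈ (Set.univ \ (S ∪ T)) ∪ ({x, y} : Set V),
      (if v ∈ S then x else if v ∈ T then y else v) = v) := by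
  have hdisj : Disjoint S T := Set.disjoint_left.2 fun v hvS hvT => (hST v hvS v hvT).false
  have hSconn : S.OrdConnected := ⟨fun a ha c hc b hb => hSint a b c ha hc hb.1 hb.2⟩
  have hTconn : T.OrdConnected := ⟨fun a ha c hc b hb => hTint a b c ha hc hb.1 hb.2⟩
  exact ⟨monotone_collapsePair hSconn hTconn hx hy (hdisj.notMem_of_mem_left hx),
    collapsePair_mem, fun _ _ => adj_collapsePair hdisj hedge hxy,
    collapsePair_eq_self hx (hdisj.notMem_of_mem_right hy)⟩

/-- Let `S` and `T` be disjoint independent intervals of an ordered graph `G`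
with every vertex of `S` smaller than every vertex of `T`, such that every
edge of `G` incident to `S ∪ T` has one endpoint in `S` and the other in `T`,
and let `x ∈ S`, `y ∈ T` with `xy` an edge of `G`.  Then the map fixing all
vertices outside `S ∪ T`, sending `S` to `x` and `T` to `y`, is an ordered
retraction of `G` onto the ordered subgraph of `G` induced by
`(V(G) ∖ (S ∪ T)) ∪ {x, y}`. -/
theorem stmt18 {V : Type*} [LinearOrder V] (G : SimpleGraph V) (S T : Set V)
    [DecidablePred (· ∈ S)] [DecidablePred (· ∈ T)]
    (hdisj : Disjoint S T)
    (hSint : ∀ a b c : V, a ∈ S → c ∈ S → a ≤ b → b ≤ c → b ∈ S)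
    (hSind : ∀ a ∈ S, ∀ b ∈ S, ¬ G.Adj a b)
    (hTint : ∀ a b c : V, a ∈ T → c ∈ T → a ≤ b → b ≤ c → b ∈ T)
    (hTind : ∀ a ∈ T, ∀ b ∈ T, ¬ G.Adj a b)
    (hST : ∀ s ∈ S, ∀ t ∈ T, s < t)
    (hedge : ∀ u v : V, G.Adj u v → u ∈ S ∪ T →
      (u ∈ S ∧ v ∈ T) ∨ (u ∈ T ∧ v ∈ S))
    (x : V) (hx : x ∈ S) (y : V) (hy : y ∈ T) (hxy : G.Adj x y) :
    Monotone (fun v : V => if v ∈ S then x else if v ∈ T then y else v) ∧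
    (∀ v : V, (if v ∈ S then x else if v ∈ T then y else v) ∈
        (Set.univ \ (S ∪ T)) ∪ {x, y}) ∧
    (∀ u v : V, G.Adj u v →
      G.Adj (if u ∈ S then x else if u ∈ T then y else u)
        (if v ∈ S then x else if v ∈ T then y else v)) ∧
    (∀ v ∈ (Set.univ \ (S ∪ T)) ∪ ({x, y} : Set V),
      (if v ∈ S then x else if v ∈ T then y else v) = v) :=
  stmt18_general G S T hSint hTint hST hedge x hx y hy hxy
end
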